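/- Let 0 ≤ λ, μ ≤ 1/2 and let F be the distribution function as above. Then for each k ≥ 1, the k-th moment of F satisfies ∫ x^k dF(x) = [2π(λ+μ) − 6πλμ]·∫_{0}^{1/2} x^k·sin(πx) dx − 2π²λμ·∫_{0}^{1/2} x^{k+1}·cos(πx) dx + 2πλμ·∫_{1/2}^{1} x^k·[sin(πx) − π(1−x)cos(πx)] dx. -/

import Mathlib

open MeasureTheory Set Real Interval

/-! The measure `dF` is an atom of mass `(1 - 2λ)(1 - 2μ)` at `0` plus an absolutely continuous
part: on `[0, 1/2]` and `[1/2, 1]` the function `F` is smooth with derivatives `densityLeft` and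
`densityRight`, both nonnegative for `λ, μ ∈ [0, 1/2]`, and the pieces agree at `1/2` and `1`.
So `dF = (1 - 2λ)(1 - 2μ) δ₀ + density dx`; for `k ≥ 1` the atom contributes `0 ^ k = 0`, and
`∫ x ^ k density` splits into the three integrals of the statement. -/

theorem intervalIntegral.integral_indicator_Ioc_eq_sub {f f' : ℝ → ℝ} {a₀ a b : ℝ}
    (h₀ : a₀ ≤ a) (hab : a ≤ b) (hf : ∀ x ∈ Icc a b, HasDerivAt f (f' x) x)
    (hf' : IntervalIntegrable f' volume a b) (x : ℝ) :
    ∫ t in a₀..x, (Ioc a b).indicator f' t = f (max a (min x b)) - f a := by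
  set x' := max a (min x b)
  have hx' : x' ∈ Icc a b := ⟨le_max_left _ _, max_le hab (min_le_right _ _)⟩
  have hint : ∀ u v, IntervalIntegrable ((Ioc a b).indicator f') volume u v := fun u v =>
    (((intervalIntegrable_iff_integrableOn_Ioc_of_le hab).1 hf').integrable_indicator
      measurableSet_Ioc).intervalIntegrable
  have hvanish : ∀ u v, (∀ t ∈ Ι u v, t ∉ Ioc a b) →
      ∫ t in u..v, (Ioc a b).indicator f' t = 0 := fun u v huv =>
    intervalIntegral.integral_zero_ae (ae_of_all _ fun t ht => indicator_of_notMem (huv t ht) _)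
  have hmid : ∫ t in a..x', (Ioc a b).indicator f' t = ∫ t in a..x', f' t :=
    intervalIntegral.integral_congr_ae (ae_of_all _ fun t ht =>
      indicator_of_mem (Ioc_subset_Ioc_right hx'.2 (uIoc_of_le hx'.1 ▸ ht)) _)
  have hbelow : ∫ t in a₀..a, (Ioc a b).indicator f' t = 0 := hvanish a₀ a fun t ht h => by
    simp only [mem_uIoc, mem_Ioc] at ht h
    grind
  have habove : ∫ t in x'..x, (Ioc a b).indicator f' t = 0 := hvanish x' x fun t ht h => by
    simp only [mem_uIoc, mem_Ioc] at ht h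
    grind
  rw [← intervalIntegral.integral_add_adjacent_intervals (hint a₀ a) (hint a x),
    ← intervalIntegral.integral_add_adjacent_intervals (hint a x') (hint x' x),
    hbelow, habove, hmid, intervalIntegral.integral_eq_sub_of_hasDerivAt
      (fun t ht => hf t (Icc_subset_Icc_right hx'.2 (uIcc_of_le hx'.1 ▸ ht)))
      (hf'.mono_set (uIcc_subset_uIcc_left (uIcc_of_le hab ▸ hx')))]
  ring

theorem StieltjesFunction.measure_eq_smul_dirac_add_withDensity (F : StieltjesFunction ℝ)
    {g : ℝ → ℝ} (hg : Integrable g) (hg0 : 0 ≤ g) {c x₀ : ℝ} (hc : 0 ≤ c)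
    (hF : ∀ x, F x = (Ici x₀).indicator (fun _ => c) x + ∫ t in x₀..x, g t) :
    F.measure = ENNReal.ofReal c • Measure.dirac x₀
      + volume.withDensity (fun x => ENNReal.ofReal (g x)) := by
  refine Measure.ext_of_Ioc _ _ fun a b hab => ?_
  have hjump : (Ici x₀).indicator (fun _ => c) b - (Ici x₀).indicator (fun _ => c) a
      = (Ioc a b).indicator (fun _ => c) x₀ := by
    by_cases ha : x₀ ≤ a
    · simp [indicator, ha, ha.trans hab.le]
    · by_cases hb : x₀ ≤ b <;> simp [indicator, ha, hb]
  rw [F.measure_Ioc, hF, hF, Measure.add_apply, Measure.smul_apply,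
    Measure.dirac_apply' _ measurableSet_Ioc, withDensity_apply _ measurableSet_Ioc,
    ← ofReal_integral_eq_lintegral_ofReal hg.integrableOn (ae_of_all _ hg0),
    ← intervalIntegral.integral_of_le hab.le, add_sub_add_comm, hjump,
    intervalIntegral.integral_interval_sub_left hg.intervalIntegrable hg.intervalIntegrable,
    ENNReal.ofReal_add (indicator_nonneg (fun _ _ => hc) _)
      (intervalIntegral.integral_nonneg hab.le fun t _ => hg0 t)]
  by_cases h : x₀ ∈ Ioc a b <;> simp [h]

theorem MeasureTheory.integral_smul_dirac_add_withDensity {α E : Type*} [MeasurableSpace α]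
    [MeasurableSingletonClass α] [NormedAddCommGroup E] [NormedSpace ℝ E] [CompleteSpace E]
    {μ : Measure α} {f : α → E} {g : α → ℝ} (hg : AEMeasurable g μ) (hg0 : 0 ≤ g)
    (hgf : Integrable (fun x => g x • f x) μ) {c : ℝ} (hc : 0 ≤ c) (x₀ : α) :
    ∫ x, f x ∂(ENNReal.ofReal c • Measure.dirac x₀
        + μ.withDensity fun x => ENNReal.ofReal (g x))
      = c • f x₀ + ∫ x, g x • f x ∂μ := by
  have hρ : AEMeasurable (fun x => ENNReal.ofReal (g x)) μ := hg.ennreal_ofReal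
  have hfin : ∀ᵐ x ∂μ, ENNReal.ofReal (g x) < ⊤ :=
    ae_of_all _ fun _ => ENNReal.ofReal_lt_top
  have htoReal : ∀ x, (ENNReal.ofReal (g x)).toReal = g x := fun x =>
    ENNReal.toReal_ofReal (hg0 x)
  have hdirac : Integrable f (ENNReal.ofReal c • Measure.dirac x₀) :=
    (integrable_dirac enorm_lt_top).smul_measure ENNReal.ofReal_ne_top
  have hdens : Integrable f (μ.withDensity fun x => ENNReal.ofReal (g x)) := by
    rw [integrable_withDensity_iff_integrable_smul₀' hρ hfin]
    simpa only [htoReal] using hgf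
  rw [integral_add_measure hdirac hdens, integral_smul_measure, integral_dirac,
    integral_withDensity_eq_integral_toReal_smul₀ hρ hfin, ENNReal.toReal_ofReal hc]
  simp only [htoReal]

theorem Real.mul_cos_le_sin {x : ℝ} (h0 : 0 ≤ x) (h1 : x ≤ π / 2) : x * cos x ≤ sin x := by
  rcases h1.lt_or_eq with h1 | rfl
  · have hcos : 0 < cos x := cos_pos_of_mem_Ioo ⟨by linarith [pi_pos], h1⟩
    simpa [tan_eq_sin_div_cos, le_div_iff₀ hcos] using le_tan h0 h1
  · simp

namespace TrigCDF

variable (lam mu : ℝ)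

noncomputable def cdfLeft (x : ℝ) : ℝ :=
  1 - 2 * (lam + mu) * cos (π * x) + 2 * (2 * cos (π * x) - π * x * sin (π * x)) * (lam * mu)

noncomputable def cdfRight (x : ℝ) : ℝ :=
  1 + 2 * π * (x - 1) * (lam * mu) * sin (π * x)

noncomputable def cdf (x : ℝ) : ℝ :=
  if x < 0 then 0
  else if x < 1/2 then cdfLeft lam mu x
  else if x < 1 then cdfRight lam mu x
  else 1

noncomputable def densityLeft (x : ℝ) : ℝ :=
  (2 * π * (lam + mu) - 6 * π * lam * mu) * sin (π * x)
    - 2 * π ^ 2 * lam * mu * x * cos (π * x)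

noncomputable def densityRight (x : ℝ) : ℝ :=
  2 * π * lam * mu * (sin (π * x) - π * (1 - x) * cos (π * x))

noncomputable def density : ℝ → ℝ :=
  (Ioc 0 (1/2)).indicator (densityLeft lam mu) + (Ioc (1/2) 1).indicator (densityRight lam mu)

theorem hasDerivAt_cdfLeft (x : ℝ) : HasDerivAt (cdfLeft lam mu) (densityLeft lam mu x) x := by
  have hlin : HasDerivAt (fun y => π * y) π x := by simpa using (hasDerivAt_id x).const_mul π
  exact (((hlin.cos.const_mul (2 * (lam + mu))).const_sub 1).add
    ((((hlin.cos.const_mul 2).sub (hlin.mul hlin.sin)).const_mul 2).mul_const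
      (lam * mu))).congr_deriv (by unfold densityLeft; ring)

theorem hasDerivAt_cdfRight (x : ℝ) : HasDerivAt (cdfRight lam mu) (densityRight lam mu x) x := by
  have hlin : HasDerivAt (fun y => π * y) π x := by simpa using (hasDerivAt_id x).const_mul π
  exact ((((((hasDerivAt_id x).sub_const 1).const_mul (2 * π)).mul_const (lam * mu)).mul
    hlin.sin).const_add 1).congr_deriv (by unfold densityRight; simp only [id]; ring)

theorem cdfLeft_zero : cdfLeft lam mu 0 = (1 - 2 * lam) * (1 - 2 * mu) := by
  simp only [cdfLeft, mul_zero, cos_zero, sin_zero]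
  ring

theorem cdfLeft_half : cdfLeft lam mu (1/2) = cdfRight lam mu (1/2) := by
  simp only [cdfLeft, cdfRight, ← div_eq_mul_one_div, cos_pi_div_two, sin_pi_div_two]
  ring

theorem cdfRight_one : cdfRight lam mu 1 = 1 := by
  simp [cdfRight]

theorem continuous_densityLeft : Continuous (densityLeft lam mu) := by
  unfold densityLeft; fun_prop

theorem continuous_densityRight : Continuous (densityRight lam mu) := by
  unfold densityRight; fun_prop

variable {lam mu}

theorem densityLeft_nonneg (hl0 : 0 ≤ lam) (hl1 : lam ≤ 1/2) (hm0 : 0 ≤ mu) (hm1 : mu ≤ 1/2)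
    {x : ℝ} (hx : x ∈ Icc 0 (1/2)) : 0 ≤ densityLeft lam mu x := by
  have hπx : 0 ≤ π * x := mul_nonneg pi_pos.le hx.1
  have hsin : 0 ≤ sin (π * x) := sin_nonneg_of_nonneg_of_le_pi hπx (by nlinarith [pi_pos, hx.2])
  have hcos : π * x * cos (π * x) ≤ sin (π * x) :=
    mul_cos_le_sin hπx (by nlinarith [pi_pos, hx.2])
  -- `densityLeft = 2π(λ + μ - 4λμ) sin πx + 2πλμ (sin πx - πx cos πx)`
  have h1 : 0 ≤ 2 * π * (lam + mu - 4 * lam * mu) * sin (π * x) :=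
    mul_nonneg (mul_nonneg (by positivity) (by nlinarith)) hsin
  have h2 : 0 ≤ 2 * π * (lam * mu) * (sin (π * x) - π * x * cos (π * x)) :=
    mul_nonneg (by positivity) (by linarith)
  unfold densityLeft
  linarith

theorem densityRight_nonneg (hl0 : 0 ≤ lam) (hm0 : 0 ≤ mu) {x : ℝ} (hx : x ∈ Icc (1/2) 1) :
    0 ≤ densityRight lam mu x := by
  have hsin : 0 ≤ sin (π * x) :=
    sin_nonneg_of_nonneg_of_le_pi (by nlinarith [pi_pos, hx.1]) (by nlinarith [pi_pos, hx.2])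
  have hcos : cos (π * x) ≤ 0 :=
    cos_nonpos_of_pi_div_two_le_of_le (by nlinarith [pi_pos, hx.1]) (by nlinarith [pi_pos, hx.2])
  have : π * (1 - x) * cos (π * x) ≤ 0 :=
    mul_nonpos_of_nonneg_of_nonpos (mul_nonneg pi_pos.le (by linarith [hx.2])) hcos
  exact mul_nonneg (by positivity) (by linarith)

theorem density_nonneg (hl0 : 0 ≤ lam) (hl1 : lam ≤ 1/2) (hm0 : 0 ≤ mu) (hm1 : mu ≤ 1/2) :
    0 ≤ density lam mu := fun _ =>
  add_nonneg
    (indicator_nonneg (fun _ hx => densityLeft_nonneg hl0 hl1 hm0 hm1 (Ioc_subset_Icc_self hx)) _)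
    (indicator_nonneg (fun _ hx => densityRight_nonneg hl0 hm0 (Ioc_subset_Icc_self hx)) _)

variable (lam mu)

theorem density_mul (φ : ℝ → ℝ) : (fun x => density lam mu x * φ x) =
    (Ioc 0 (1/2)).indicator (fun x => densityLeft lam mu x * φ x)
      + (Ioc (1/2) 1).indicator (fun x => densityRight lam mu x * φ x) := by
  ext x
  simp only [density, Pi.add_apply, add_mul, indicator_mul_left]

variable {φ : ℝ → ℝ}

theorem integrable_indicator_densityLeft_mul (hφ : Continuous φ) :
    Integrable ((Ioc 0 (1/2)).indicator fun x => densityLeft lam mu x * φ x) :=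
  ((continuous_densityLeft lam mu).mul hφ).integrableOn_Ioc.integrable_indicator measurableSet_Ioc

theorem integrable_indicator_densityRight_mul (hφ : Continuous φ) :
    Integrable ((Ioc (1/2) 1).indicator fun x => densityRight lam mu x * φ x) :=
  ((continuous_densityRight lam mu).mul hφ).integrableOn_Ioc.integrable_indicator measurableSet_Ioc

theorem integrable_density_mul (hφ : Continuous φ) :
    Integrable (fun x => density lam mu x * φ x) := by
  rw [density_mul]
  exact (integrable_indicator_densityLeft_mul lam mu hφ).add
    (integrable_indicator_densityRight_mul lam mu hφ)

theorem integrable_density : Integrable (density lam mu) := by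
  simpa using integrable_density_mul lam mu (φ := fun _ => 1) continuous_const

theorem integral_density_mul (hφ : Continuous φ) :
    ∫ x, density lam mu x * φ x = (∫ x in (0:ℝ)..(1/2), densityLeft lam mu x * φ x)
      + ∫ x in (1/2:ℝ)..1, densityRight lam mu x * φ x := by
  rw [density_mul, integral_add' (integrable_indicator_densityLeft_mul lam mu hφ)
    (integrable_indicator_densityRight_mul lam mu hφ), integral_indicator measurableSet_Ioc,
    integral_indicator measurableSet_Ioc, intervalIntegral.integral_of_le (by norm_num),
    intervalIntegral.integral_of_le (by norm_num)]

theorem cdf_eq_indicator_add_integral (x : ℝ) :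
    cdf lam mu x = (Ici 0).indicator (fun _ => (1 - 2 * lam) * (1 - 2 * mu)) x
      + ∫ t in (0:ℝ)..x, density lam mu t := by
  have hL := intervalIntegral.integral_indicator_Ioc_eq_sub (le_refl 0)
    (by norm_num : (0:ℝ) ≤ 1/2) (fun t _ => hasDerivAt_cdfLeft lam mu t)
    ((continuous_densityLeft lam mu).intervalIntegrable _ _) x
  have hR := intervalIntegral.integral_indicator_Ioc_eq_sub (by norm_num : (0:ℝ) ≤ 1/2)
    (by norm_num : (1/2:ℝ) ≤ 1) (fun t _ => hasDerivAt_cdfRight lam mu t)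
    ((continuous_densityRight lam mu).intervalIntegrable _ _) x
  have hint : ∀ {f : ℝ → ℝ} {a b : ℝ}, Continuous f →
      IntervalIntegrable ((Ioc a b).indicator f) volume 0 x := fun hf =>
    (hf.integrableOn_Ioc.integrable_indicator measurableSet_Ioc).intervalIntegrable
  simp only [density, Pi.add_apply]
  rw [intervalIntegral.integral_add (hint (continuous_densityLeft lam mu))
    (hint (continuous_densityRight lam mu)), hL, hR, cdf]
  split_ifs with hneg hleft hright
  · rw [min_eq_left (by linarith), max_eq_left hneg.le, min_eq_left (by linarith),
      max_eq_left (by linarith), indicator_of_notMem (notMem_Ici.2 hneg)]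
    ring
  · rw [min_eq_left hleft.le, max_eq_right (not_lt.1 hneg), min_eq_left (by linarith),
      max_eq_left (by linarith), indicator_of_mem (mem_Ici.2 (not_lt.1 hneg)), cdfLeft_zero]
    ring
  · rw [min_eq_right (not_lt.1 hleft), max_eq_right (by norm_num), min_eq_left hright.le,
      max_eq_right (not_lt.1 hleft), indicator_of_mem (mem_Ici.2 (not_lt.1 hneg)), cdfLeft_zero,
      cdfLeft_half]
    ring
  · rw [min_eq_right (by linarith), max_eq_right (by norm_num), min_eq_right (not_lt.1 hright),
      max_eq_right (by norm_num), indicator_of_mem (mem_Ici.2 (not_lt.1 hneg)), cdfLeft_zero,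
      cdfLeft_half, cdfRight_one]
    ring

theorem integral_density_mul_pow (k : ℕ) :
    ∫ x, density lam mu x * x ^ k =
      (2 * π * (lam + mu) - 6 * π * lam * mu) * (∫ x in (0:ℝ)..(1/2), x ^ k * sin (π * x))
        - 2 * π ^ 2 * lam * mu * (∫ x in (0:ℝ)..(1/2), x ^ (k + 1) * cos (π * x))
        + 2 * π * lam * mu *
          (∫ x in (1/2:ℝ)..1, x ^ k * (sin (π * x) - π * (1 - x) * cos (π * x))) := by
  have hleft : ∫ x in (0:ℝ)..(1/2), densityLeft lam mu x * x ^ k =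
      (2 * π * (lam + mu) - 6 * π * lam * mu) * (∫ x in (0:ℝ)..(1/2), x ^ k * sin (π * x))
        - 2 * π ^ 2 * lam * mu * (∫ x in (0:ℝ)..(1/2), x ^ (k + 1) * cos (π * x)) := by
    rw [← intervalIntegral.integral_const_mul, ← intervalIntegral.integral_const_mul,
      ← intervalIntegral.integral_sub (Continuous.intervalIntegrable (by fun_prop) _ _)
        (Continuous.intervalIntegrable (by fun_prop) _ _)]
    congr 1 with x
    rw [densityLeft, pow_succ]
    ring
  have hright : ∫ x in (1/2:ℝ)..1, densityRight lam mu x * x ^ k = 2 * π * lam * mu *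
      (∫ x in (1/2:ℝ)..1, x ^ k * (sin (π * x) - π * (1 - x) * cos (π * x))) := by
    rw [← intervalIntegral.integral_const_mul]
    congr 1 with x
    rw [densityRight]
    ring
  rw [integral_density_mul lam mu (continuous_pow k), hleft, hright]

end TrigCDF

theorem stmt_11 (lam mu : ℝ) (hl0 : 0 ≤ lam) (hl1 : lam ≤ 1/2)
    (hm0 : 0 ≤ mu) (hm1 : mu ≤ 1/2)
    (F : StieltjesFunction ℝ)
    (hF : ∀ x : ℝ, F x =
      if x < 0 then 0
      else if x < 1/2 then
        1 - 2 * (lam + mu) * Real.cos (Real.pi * x) +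
          2 * (2 * Real.cos (Real.pi * x) - Real.pi * x * Real.sin (Real.pi * x)) * (lam * mu)
      else if x < 1 then 1 + 2 * Real.pi * (x - 1) * (lam * mu) * Real.sin (Real.pi * x)
      else 1)
    (k : ℕ) (hk : 1 ≤ k) :
    ∫ x, x^k ∂F.measure =
      (2 * Real.pi * (lam + mu) - 6 * Real.pi * lam * mu) *
          (∫ x in (0:ℝ)..(1/2), x^k * Real.sin (Real.pi * x)) -
        2 * Real.pi^2 * lam * mu *
          (∫ x in (0:ℝ)..(1/2), x^(k+1) * Real.cos (Real.pi * x)) +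
        2 * Real.pi * lam * mu *
          (∫ x in (1/2:ℝ)..1,
            x^k * (Real.sin (Real.pi * x) - Real.pi * (1 - x) * Real.cos (Real.pi * x))) := by
  have hatom : 0 ≤ (1 - 2 * lam) * (1 - 2 * mu) := mul_nonneg (by linarith) (by linarith)
  have hρ := TrigCDF.density_nonneg hl0 hl1 hm0 hm1
  rw [F.measure_eq_smul_dirac_add_withDensity (TrigCDF.integrable_density lam mu) hρ hatom
      fun x => (hF x).trans (TrigCDF.cdf_eq_indicator_add_integral lam mu x),
    integral_smul_dirac_add_withDensity (TrigCDF.integrable_density lam mu).aemeasurable hρ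
      (TrigCDF.integrable_density_mul lam mu (continuous_pow k)) hatom,
    zero_pow (by omega), smul_zero, zero_add]
  simpa only [smul_eq_mul] using TrigCDF.integral_density_mul_pow lam mu k
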